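/- Let 0 ≤ 8√θ < γ ≤ 1/4 and n ≥ 3/γ. Let G be a 2-colored balanced bipartite graph with parts X, Y of size n and δ(G) ≥ (3/4 + γ)n. Suppose X′ ⊆ X, Y′ ⊆ Y satisfy |X′|, |Y′| ≥ (1/2 − γ/8)n and the number of red edges between X′ and Y′ is at most θn². Define X_S = {x ∈ X′ : x has at most |Y′| − n/2 + γn/2 blue neighbors in Y′} and Y_S symmetrically. Then |X_S| ≤ 4θn and |Y_S| ≤ 4θn. -/

import Mathlib

/-! A vertex `x ∈ X'` of small blue degree into `Y'` still has at least `|Y'| - n/4 + γn`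
`G`-neighbours in `Y'`, as it misses at most `n/4 - γn` vertices of `Y`; so at least `n/4` of
its edges into `Y'` are red. Counting red edges from `X_S` gives `|X_S| · n/4 ≤ θn²`. -/

open SimpleGraph Set

noncomputable def eCount {V : Type*} (K : SimpleGraph V) (A B' : Set V) : ℕ :=
  {p : V × V | p.1 ∈ A ∧ p.2 ∈ B' ∧ K.Adj p.1 p.2}.ncard

noncomputable def dIn {V : Type*} (K : SimpleGraph V) (x : V) (S : Set V) : ℕ :=
  (K.neighborSet x ∩ S).ncard

namespace SimpleGraph

variable {V : Type*} {K R B : SimpleGraph V} {x : V} {A A' T W : Set V}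

theorem eCount_comm (K : SimpleGraph V) (A T : Set V) : eCount K A T = eCount K T A :=
  Set.ncard_congr (fun p _ => p.swap) (fun _ hp => ⟨hp.2.1, hp.1, hp.2.2.symm⟩)
    (fun _ _ _ _ h => Prod.swap_injective h)
    (fun p hp => ⟨p.swap, ⟨hp.2.1, hp.1, hp.2.2.symm⟩, rfl⟩)

theorem eCount_mono_left [Finite V] (h : A ⊆ A') : eCount K A T ≤ eCount K A' T :=
  Set.ncard_le_ncard fun _ hp => ⟨h hp.1, hp.2⟩

theorem eCount_coe_finset [Fintype V] (K : SimpleGraph V) (A : Finset V) (T : Set V) :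
    eCount K A T = ∑ x ∈ A, dIn K x T := by
  classical
  have hpairs : {p : V × V | p.1 ∈ (A : Set V) ∧ p.2 ∈ T ∧ K.Adj p.1 p.2}
      = ↑((A ×ˢ T.toFinset).filter fun p => K.Adj p.1 p.2) := by
    ext p; simp [and_assoc]
  rw [eCount, hpairs, Set.ncard_coe_finset, Finset.card_filter, Finset.sum_product]
  refine Finset.sum_congr rfl fun y _ => ?_
  rw [dIn, ← Finset.card_filter, ← Set.ncard_coe_finset]
  congr 1
  ext z
  simp [and_comm]

theorem ncard_mul_le_eCount [Finite V] {c : ℝ} (h : ∀ x ∈ A, c ≤ dIn K x T) :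
    (A.ncard : ℝ) * c ≤ eCount K A T := by
  have := Fintype.ofFinite V
  lift A to Finset V using A.toFinite
  rw [Set.ncard_coe_finset, eCount_coe_finset, Nat.cast_sum, ← nsmul_eq_mul]
  exact Finset.card_nsmul_le_sum _ _ _ h

theorem dIn_sup_le (R B : SimpleGraph V) (x : V) (T : Set V) :
    dIn (R ⊔ B) x T ≤ dIn R x T + dIn B x T := by
  rw [dIn, neighborSet_sup, union_inter_distrib_right]
  exact Set.ncard_union_le _ _

theorem ncard_neighborSet_add_ncard_le [Finite V] (hTW : T ⊆ W) (hxW : K.neighborSet x ⊆ W) :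
    (K.neighborSet x).ncard + T.ncard ≤ W.ncard + dIn K x T := by
  rw [dIn, ← Set.ncard_union_add_ncard_inter]
  exact Nat.add_le_add_right (Set.ncard_le_ncard (union_subset hxW hTW)) _

theorem div_four_le_dIn_of_dIn_le [Finite V] {n : ℕ} {γ : ℝ} (hγ : 0 ≤ γ) (hTW : T ⊆ W)
    (hW : W.ncard = n) (hxW : (R ⊔ B).neighborSet x ⊆ W)
    (hdeg : (3 / 4 + γ) * n ≤ ((R ⊔ B).neighborSet x).ncard)
    (hblue : (dIn B x T : ℝ) ≤ T.ncard - n / 2 + γ * n / 2) :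
    (n : ℝ) / 4 ≤ dIn R x T := by
  have hG : (((R ⊔ B).neighborSet x).ncard : ℝ) + T.ncard ≤ n + (dIn R x T + dIn B x T) := by
    exact_mod_cast hW ▸ (ncard_neighborSet_add_ncard_le hTW hxW).trans
      (Nat.add_le_add_left (dIn_sup_le R B x T) _)
  nlinarith [Nat.cast_nonneg (α := ℝ) n]

theorem ncard_smallBlueDegree_mul_le_eCount [Finite V] {S : Set V} {n : ℕ} {γ : ℝ}
    (hγ : 0 ≤ γ) (hTW : T ⊆ W) (hW : W.ncard = n)
    (hSW : ∀ x ∈ S, (R ⊔ B).neighborSet x ⊆ W)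
    (hdeg : ∀ x ∈ S, (3 / 4 + γ) * n ≤ ((R ⊔ B).neighborSet x).ncard) :
    ({x ∈ S | (dIn B x T : ℝ) ≤ T.ncard - n / 2 + γ * n / 2}.ncard : ℝ) * (n / 4)
      ≤ eCount R S T :=
  (ncard_mul_le_eCount fun x hx =>
      div_four_le_dIn_of_dIn_le hγ hTW hW (hSW x hx.1) (hdeg x hx.1) hx.2).trans
    (by exact_mod_cast eCount_mono_left (sep_subset _ _))

variable {α β : Type*} {G : SimpleGraph (α ⊕ β)}

theorem neighborSet_inl_subset_range_inr (hG : G ≤ completeBipartiteGraph α β) (a : α) :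
    G.neighborSet (.inl a) ⊆ range .inr := by
  rintro (b | b) hb
  · simpa using hG hb
  · exact mem_range_self b

theorem neighborSet_inr_subset_range_inl (hG : G ≤ completeBipartiteGraph α β) (b : β) :
    G.neighborSet (.inr b) ⊆ range .inl := by
  rintro (a | a) ha
  · exact mem_range_self a
  · simpa using hG ha

end SimpleGraph

theorem small_blue_degree_sets_general (θ γ : ℝ) (n : ℕ)
    (hθγ : 8 * Real.sqrt θ < γ)
    (hn : 3 / γ ≤ (n : ℝ))
    (G R B : SimpleGraph (Fin n ⊕ Fin n))
    (hbip : G ≤ completeBipartiteGraph (Fin n) (Fin n))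
    (hcol : R ⊔ B = G)
    (hdeg : ∀ v, (3 / 4 + γ) * n ≤ ((G.neighborSet v).ncard : ℝ))
    (X' Y' : Set (Fin n ⊕ Fin n))
    (hX' : X' ⊆ Set.range Sum.inl) (hY' : Y' ⊆ Set.range Sum.inr)
    (hred : (eCount R X' Y' : ℝ) ≤ θ * n ^ 2) :
    (({x ∈ X' | (dIn B x Y' : ℝ) ≤ (Y'.ncard : ℝ) - n / 2 + γ * n / 2}.ncard : ℕ) : ℝ)
      ≤ 4 * θ * n ∧
    (({y ∈ Y' | (dIn B y X' : ℝ) ≤ (X'.ncard : ℝ) - n / 2 + γ * n / 2}.ncard : ℕ) : ℝ)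
      ≤ 4 * θ * n := by
  subst hcol
  have hγ : 0 < γ := (mul_nonneg (by norm_num) (Real.sqrt_nonneg θ)).trans_lt hθγ
  have hnpos : (0 : ℝ) < n := (div_pos (by norm_num) hγ).trans_le hn
  have hside : ∀ e : Fin n → Fin n ⊕ Fin n, Function.Injective e → (range e).ncard = n :=
    fun e he => by rw [ncard_range_of_injective he, Nat.card_eq_fintype_card, Fintype.card_fin]
  have hcancel : ∀ c : ℝ, c * (n / 4) ≤ θ * n ^ 2 → c ≤ 4 * θ * n := fun c h =>
    le_of_mul_le_mul_right (h.trans_eq (by ring)) (by positivity)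
  constructor
  · refine hcancel _ ((ncard_smallBlueDegree_mul_le_eCount hγ.le hY' (hside _ Sum.inr_injective)
      ?_ fun v _ => hdeg v).trans hred)
    rintro _ hx
    obtain ⟨a, rfl⟩ := hX' hx
    exact neighborSet_inl_subset_range_inr hbip a
  · refine hcancel _ ((ncard_smallBlueDegree_mul_le_eCount hγ.le hX' (hside _ Sum.inl_injective)
      ?_ fun v _ => hdeg v).trans (eCount_comm R Y' X' ▸ hred))
    rintro _ hy
    obtain ⟨b, rfl⟩ := hY' hy
    exact neighborSet_inr_subset_range_inl hbip b

/-- The sets of vertices of `X'` (resp. `Y'`) with small blue degree into `Y'`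
(resp. `X'`) have size at most `4θn`. -/
theorem small_blue_degree_sets (θ γ : ℝ) (n : ℕ)
    (hθ : 0 ≤ θ) (hθγ : 8 * Real.sqrt θ < γ) (hγ : γ ≤ 1 / 4)
    (hn : 3 / γ ≤ (n : ℝ))
    (G R B : SimpleGraph (Fin n ⊕ Fin n))
    (hbip : G ≤ completeBipartiteGraph (Fin n) (Fin n))
    (hcol : R ⊔ B = G)
    (hdeg : ∀ v, (3 / 4 + γ) * n ≤ ((G.neighborSet v).ncard : ℝ))
    (X' Y' : Set (Fin n ⊕ Fin n))
    (hX' : X' ⊆ Set.range Sum.inl) (hY' : Y' ⊆ Set.range Sum.inr)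
    (hX'card : (1 / 2 - γ / 8) * n ≤ (X'.ncard : ℝ))
    (hY'card : (1 / 2 - γ / 8) * n ≤ (Y'.ncard : ℝ))
    (hred : (eCount R X' Y' : ℝ) ≤ θ * n ^ 2) :
    (({x ∈ X' | (dIn B x Y' : ℝ) ≤ (Y'.ncard : ℝ) - n / 2 + γ * n / 2}.ncard : ℕ) : ℝ)
      ≤ 4 * θ * n ∧
    (({y ∈ Y' | (dIn B y X' : ℝ) ≤ (X'.ncard : ℝ) - n / 2 + γ * n / 2}.ncard : ℕ) : ℝ)
      ≤ 4 * θ * n :=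
  small_blue_degree_sets_general θ γ n hθγ hn G R B hbip hcol hdeg X' Y' hX' hY' hred
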